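/- arXiv:math/9411207 — 2 statements merged into one kernel-verified Lean document; each statement's English description precedes it below -/
import Mathlib

section
/- For every natural number n and every a < 2^n, the period of a + 2^n in A_{n+1} equals the period of a in A_n: p_{n+1}(a + 2^n) = p_n(a). -/
open Fin.NatCast

/-- The unique left self-distributive operation on `Fin (2^m)` with `a * 1 = a + 1`. -/
def IsCyclicLD (m : ℕ) (op : Fin (2^m) → Fin (2^m) → Fin (2^m)) : Prop :=
  (∀ a b c, op a (op b c) = op (op a b) (op a c)) ∧ ∀ a, op a 1 = a + 1

/-- The period `p_m(a)`: the least positive `p` with `a * (p mod 2^m) = 0`. -/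
noncomputable def period (m : ℕ) (op : Fin (2^m) → Fin (2^m) → Fin (2^m))
    (a : Fin (2^m)) : ℕ :=
  sInf {p : ℕ | 0 < p ∧ op a ((p : ℕ) : Fin (2^m)) = 0}

/-!
Using the recursion `a * (b + 1) = (a * b) * (a + 1)` and downward induction on `a`, every entry
`a * b` is `0` or exceeds `a`, and reduction mod `2^n` is a homomorphism `A_{n+1} → A_n`.
So an entry of the row of `a + 2^n` in `A_{n+1}` lies strictly between `2^n` and `2^(n+1)` unless it
is `0`, hence vanishes mod `2^n` only if it is `0`: the rows of `a + 2^n` in `A_{n+1}` and of `a` in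
`A_n` vanish at the same places.
-/

namespace Fin

variable {N : ℕ}

theorem induction_add_one [NeZero N] {P : Fin N → Prop} (one : P 1)
    (add_one : ∀ b, P b → P (b + 1)) (b : Fin N) : P b := by
  have natCast_succ : ∀ k : ℕ, P ((k + 1 : ℕ) : Fin N) := by
    intro k
    induction k with
    | zero => simpa using one
    | succ k ih => simpa using add_one _ ih
  have hb : (((b.val + N - 1) + 1 : ℕ) : Fin N) = b := by
    rw [Nat.sub_add_cancel (by have := NeZero.pos N; omega), Nat.cast_add, Fin.natCast_self,
      add_zero, Fin.cast_val_eq_self]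
  exact hb ▸ natCast_succ _

theorem add_one_eq_zero_or_lt [NeZero N] (a : Fin N) : a + 1 = 0 ∨ a < a + 1 := by
  cases N with
  | zero => exact a.elim0
  | succ n =>
    by_cases ha : a = Fin.last n
    · exact Or.inl (ha ▸ Fin.last_add_one n)
    · exact Or.inr (Fin.lt_add_one_iff.mpr (Fin.lt_last_iff_ne_last.mpr ha))

end Fin

namespace IsCyclicLD

variable {m : ℕ} {op : Fin (2^m) → Fin (2^m) → Fin (2^m)}

theorem op_add_one (h : IsCyclicLD m op) (a b : Fin (2^m)) :
    op a (b + 1) = op (op a b) (a + 1) := by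
  simpa only [h.2] using h.1 a b 1

theorem zero_op (h : IsCyclicLD m op) (b : Fin (2^m)) : op 0 b = b := by
  induction b using Fin.induction_add_one with
  | one => simpa using h.2 0
  | add_one b ih => rw [h.op_add_one, ih, zero_add, h.2]

theorem op_eq_zero_or_lt (h : IsCyclicLD m op) (a b : Fin (2^m)) : op a b = 0 ∨ a < op a b := by
  induction a using WellFoundedGT.induction generalizing b with
  | _ a ih =>
    induction b using Fin.induction_add_one with
    | one => simpa only [h.2] using Fin.add_one_eq_zero_or_lt a
    | add_one b ihb =>
      rw [h.op_add_one]
      rcases ihb with hab | hab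
      · simpa only [hab, h.zero_op] using Fin.add_one_eq_zero_or_lt a
      · exact (ih _ hab (a + 1)).imp_right hab.trans

end IsCyclicLD

def proj (n : ℕ) (x : Fin (2^(n+1))) : Fin (2^n) := (x.val : Fin (2^n))

section Proj

variable {n : ℕ}

theorem proj_natCast (k : ℕ) : proj n (k : Fin (2^(n+1))) = (k : Fin (2^n)) := by
  apply Fin.ext
  simp only [proj, Fin.val_natCast]
  exact Nat.mod_mod_of_dvd k (pow_dvd_pow 2 n.le_succ)

theorem proj_zero : proj n 0 = 0 := by
  simpa using proj_natCast (n := n) 0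

theorem proj_add_one (x : Fin (2^(n+1))) : proj n (x + 1) = proj n x + 1 := by
  have hx : x + 1 = ((x.val + 1 : ℕ) : Fin (2^(n+1))) := by simp
  rw [hx, proj_natCast, Nat.cast_add, Nat.cast_one]
  rfl

theorem proj_one : proj n 1 = 1 := by
  simpa [proj_zero] using proj_add_one (n := n) 0

theorem proj_ne_zero_of_pow_lt {x : Fin (2^(n+1))} (hx : 2^n < x.val) : proj n x ≠ 0 := by
  intro h
  have hdvd : 2^n ∣ x.val := by
    simpa [proj, Fin.ext_iff, Fin.val_natCast] using Nat.dvd_of_mod_eq_zero (congrArg Fin.val h)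
  obtain ⟨q, hq⟩ := hdvd
  have hlt : x.val < 2^n * 2 := pow_succ 2 n ▸ x.isLt
  rw [hq] at hx hlt
  have : 1 < q := by nlinarith
  have : q < 2 := by nlinarith
  omega

end Proj

theorem IsCyclicLD.proj_op {n : ℕ} {op₀ : Fin (2^n) → Fin (2^n) → Fin (2^n)}
    {op₁ : Fin (2^(n+1)) → Fin (2^(n+1)) → Fin (2^(n+1))}
    (h₀ : IsCyclicLD n op₀) (h₁ : IsCyclicLD (n+1) op₁) (a b : Fin (2^(n+1))) :
    proj n (op₁ a b) = op₀ (proj n a) (proj n b) := by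
  induction a using WellFoundedGT.induction generalizing b with
  | _ a ih =>
    induction b using Fin.induction_add_one with
    | one => rw [h₁.2, proj_one, h₀.2, proj_add_one]
    | add_one b ihb =>
      have hc : proj n (op₁ (op₁ a b) (a + 1)) = op₀ (proj n (op₁ a b)) (proj n (a + 1)) := by
        rcases h₁.op_eq_zero_or_lt a b with hab | hab
        · rw [hab, h₁.zero_op, proj_zero, h₀.zero_op]
        · exact ih _ hab _
      rw [h₁.op_add_one, hc, ihb, proj_add_one, proj_add_one]
      exact (h₀.op_add_one _ _).symm

/-- for `a < 2^n`, `p_{n+1}(a + 2^n) = p_n(a)`. -/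
theorem period_add_pow (n : ℕ) (a : ℕ) (ha : a < 2^n)
    (op₀ : Fin (2^n) → Fin (2^n) → Fin (2^n)) (hop₀ : IsCyclicLD n op₀)
    (op₁ : Fin (2^(n+1)) → Fin (2^(n+1)) → Fin (2^(n+1))) (hop₁ : IsCyclicLD (n+1) op₁) :
    period (n+1) op₁ ((a + 2^n : ℕ) : Fin (2^(n+1))) = period n op₀ ((a : ℕ) : Fin (2^n)) := by
  set A : Fin (2^(n+1)) := ((a + 2^n : ℕ) : Fin (2^(n+1)))
  have hA_val : A.val = a + 2^n := by
    rw [Fin.val_natCast, Nat.mod_eq_of_lt (by rw [pow_succ]; omega)]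
  have hA : proj n A = a := by
    rw [proj_natCast, Nat.cast_add, Fin.natCast_self, add_zero]
  have row_eq_zero_iff : ∀ p : ℕ, op₁ A p = 0 ↔ op₀ a p = 0 := by
    intro p
    rw [← hA, ← proj_natCast (n := n) p, ← hop₀.proj_op hop₁]
    refine ⟨fun h => h ▸ proj_zero, fun h => ?_⟩
    refine (hop₁.op_eq_zero_or_lt A p).resolve_right fun hlt => proj_ne_zero_of_pow_lt ?_ h
    exact lt_of_le_of_lt (by omega) (Fin.lt_def.mp hlt)
  simp only [period, row_eq_zero_iff]
end

section
/- Let n ≥ 1 and let a < 2^{n−1} be such that the period of a doubles from A_n to A_{n+1} (i.e. p_{n+1}(a) = 2·p_n(a); this is the algebraic translation of 'γ_n is in the range of a'). Let c + 1 = t_n(a) be the threshold of a in A_n. Then a *_{n+1} c < 2^{n−1} (equivalently, the value of the word a·c is the same computed in A_{n+1}, A_n and A_{n−1}), and a ∘_{n+1} c < 2^n (equivalently, the value of the word a∘c is the same computed in A_{n+1} and A_n). -/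
/-!
Reduction modulo `2^n` is a homomorphism `A_{n+1} → A_n`, and in every `A_m` the row of `a` is
strictly increasing below the period; both facts rest on `x * y` being `0` or larger than `x`,
which follows by descending induction on `x` from `x * (y + 1) = (x * y) * (x + 1)`.
As `a *_n p = 0` for `p = p_n(a)` while `p_{n+1}(a) > p`, the value `a *_{n+1} p` is a nonzero
multiple of `2^n` below `2^{n+1}`, i.e. exactly `2^n`. Hence `a *_{n+1} b < 2^n`, so
`a *_{n+1} b = a *_n b`, for all `b < p`; both `c` and `c + 1 = t_n(a)` are below `p`, and the
bounds follow from the definition of the threshold.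
-/

open Fin.NatCast

/-- Composition on `A_m`: `x ∘_m y = (x *_m (y+1)) − 1 (mod 2^m)`. -/
def comp (m : ℕ) (op : Fin (2^m) → Fin (2^m) → Fin (2^m)) (x y : Fin (2^m)) : Fin (2^m) :=
  op x (y + 1) - 1

namespace Fin

variable {N : ℕ} [NeZero N]

theorem exists_pos_natCast_eq (y : Fin N) : ∃ k : ℕ, 0 < k ∧ (k : Fin N) = y :=
  ⟨y.val + N, by have := NeZero.pos N; omega, by simp⟩

theorem add_one_eq_zero_or_lt_add_one (x : Fin N) : x + 1 = 0 ∨ x < x + 1 := by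
  rw [Fin.lt_def, Fin.ext_iff, Fin.val_add, Fin.val_one', Nat.add_mod_mod, Fin.val_zero]
  rcases (Nat.add_one_le_iff.2 x.isLt).eq_or_lt with h | h
  · exact Or.inl (by rw [h, Nat.mod_self])
  · exact Or.inr (by rw [Nat.mod_eq_of_lt h]; omega)

theorem natCast_val_natCast {M : ℕ} [NeZero M] (hMN : M ∣ N) (k : ℕ) :
    (((k : Fin N).val : ℕ) : Fin M) = k := by
  ext
  simp only [Fin.val_natCast, Nat.mod_mod_of_dvd _ hMN]

theorem val_eq_two_pow_of_natCast_val_eq_zero {n : ℕ} {y : Fin (2^(n+1))} (hy : y ≠ 0)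
    (h : ((y.val : ℕ) : Fin (2^n)) = 0) : y.val = 2^n := by
  obtain ⟨q, hq⟩ := (Fin.natCast_eq_zero).1 h
  have hq2 : q < 2 := by
    have := y.isLt
    rw [hq, pow_succ] at this
    exact Nat.lt_of_mul_lt_mul_left this
  interval_cases q
  · exact absurd (Fin.ext (by simpa using hq)) hy
  · simpa using hq

end Fin

theorem period_le_of_apply_eq_zero {m : ℕ} {op : Fin (2^m) → Fin (2^m) → Fin (2^m)}
    (a : Fin (2^m)) {k : ℕ} (hk : 0 < k) (h : op a k = 0) : period m op a ≤ k :=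
  Nat.sInf_le ⟨hk, h⟩

namespace IsCyclicLD

variable {m : ℕ} {op : Fin (2^m) → Fin (2^m) → Fin (2^m)}

theorem apply_add_one (hop : IsCyclicLD m op) (a b : Fin (2^m)) :
    op a (b + 1) = op (op a b) (a + 1) := by
  simpa only [hop.2] using hop.1 a b 1

theorem zero_apply (hop : IsCyclicLD m op) (y : Fin (2^m)) : op 0 y = y := by
  obtain ⟨k, hk, rfl⟩ := Fin.exists_pos_natCast_eq y
  induction k, hk using Nat.le_induction with
  | base => simpa using hop.2 0
  | succ k _ ih => rw [Nat.cast_succ, hop.apply_add_one, ih, zero_add, hop.2]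

theorem eq_zero_or_lt_apply (hop : IsCyclicLD m op) (x y : Fin (2^m)) :
    op x y = 0 ∨ x < op x y := by
  induction x using WellFoundedGT.induction generalizing y with
  | _ x ih =>
  obtain ⟨k, hk, rfl⟩ := Fin.exists_pos_natCast_eq y
  induction k, hk using Nat.le_induction with
  | base => rw [Nat.cast_one, hop.2]; exact x.add_one_eq_zero_or_lt_add_one
  | succ k _ ihk =>
    rw [Nat.cast_succ, hop.apply_add_one]
    rcases ihk with h | h
    · rw [h, hop.zero_apply]; exact x.add_one_eq_zero_or_lt_add_one
    · exact (ih _ h (x + 1)).imp_right h.trans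

theorem apply_zero (hop : IsCyclicLD m op) (a : Fin (2^m)) : op a 0 = 0 := by
  have h : op a 0 = op (op a 0) (op a 0) := by simpa only [hop.zero_apply] using hop.1 a 0 0
  have := hop.eq_zero_or_lt_apply (op a 0) (op a 0)
  rw [← h] at this
  exact this.resolve_right (lt_irrefl _)

theorem period_spec (hop : IsCyclicLD m op) (a : Fin (2^m)) :
    0 < period m op a ∧ op a (period m op a) = 0 :=
  Nat.sInf_mem (s := {p : ℕ | 0 < p ∧ op a p = 0})
    ⟨2^m, Nat.two_pow_pos m, by rw [Fin.natCast_self, hop.apply_zero]⟩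

theorem periodic (hop : IsCyclicLD m op) (a : Fin (2^m)) :
    Function.Periodic (fun k : ℕ => op a k) (period m op a) := by
  intro k
  induction k with
  | zero => simp only [zero_add, Nat.cast_zero, (hop.period_spec a).2, hop.apply_zero]
  | succ k ih =>
    change op a (k + period m op a : ℕ) = op a k at ih
    change op a (k + 1 + period m op a : ℕ) = op a (k + 1 : ℕ)
    rw [Nat.add_right_comm, Nat.cast_succ, hop.apply_add_one, ih, ← hop.apply_add_one,
      Nat.cast_succ]

theorem lt_period_of_isLeast (hop : IsCyclicLD m op) {a : Fin (2^m)} {P : Fin (2^m) → Prop}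
    {k : ℕ} (hk : IsLeast {x : ℕ | P (op a x)} k) : k < period m op a := by
  have hmod : k % period m op a ∈ {x : ℕ | P (op a x)} := by
    simpa only [Set.mem_ofPred_eq, (hop.periodic a).map_mod_nat] using hk.1
  exact (hk.2 hmod).trans_lt (Nat.mod_lt _ (hop.period_spec a).1)

theorem apply_lt_apply_succ (hop : IsCyclicLD m op) (a : Fin (2^m)) {k : ℕ}
    (hk : k + 1 < period m op a) : op a k < op a (k + 1 : ℕ) := by
  rw [Nat.cast_succ, hop.apply_add_one]
  refine (hop.eq_zero_or_lt_apply _ _).resolve_left fun h => ?_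
  have := period_le_of_apply_eq_zero (op := op) a k.succ_pos
    (by rw [Nat.cast_succ, hop.apply_add_one, h])
  omega

theorem strictMonoOn_apply (hop : IsCyclicLD m op) (a : Fin (2^m)) :
    StrictMonoOn (fun k : ℕ => op a k) (Set.Iio (period m op a)) := by
  have h := strictMonoOn_Iic_of_lt_succ (n := period m op a - 1) (ψ := fun k : ℕ => op a k)
    fun k hk => by rw [Order.succ_eq_add_one]; exact hop.apply_lt_apply_succ a (by omega)
  intro i hi j hj hij
  simp only [Set.mem_Iio] at hi hj
  exact h (by simp only [Set.mem_Iic]; omega) (by simp only [Set.mem_Iic]; omega) hij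

end IsCyclicLD

theorem IsCyclicLD.natCast_val_apply {m k : ℕ} (hkm : k ≤ m)
    {op : Fin (2^m) → Fin (2^m) → Fin (2^m)} {op' : Fin (2^k) → Fin (2^k) → Fin (2^k)}
    (hop : IsCyclicLD m op) (hop' : IsCyclicLD k op') (x y : Fin (2^m)) :
    (((op x y).val : ℕ) : Fin (2^k)) = op' (x.val : Fin (2^k)) (y.val : Fin (2^k)) := by
  have hdvd : 2^k ∣ 2^m := pow_dvd_pow 2 hkm
  have val_add_one (z : Fin (2^m)) :
      (((z + 1).val : ℕ) : Fin (2^k)) = ((z.val : ℕ) : Fin (2^k)) + 1 := by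
    rw [← Fin.cast_val_eq_self z, ← Nat.cast_succ, Fin.natCast_val_natCast hdvd,
      Fin.natCast_val_natCast hdvd, Nat.cast_succ]
  induction x using WellFoundedGT.induction generalizing y with
  | _ x ih =>
  obtain ⟨j, rfl⟩ : ∃ j : ℕ, (j : Fin (2^m)) = y := ⟨y.val, Fin.cast_val_eq_self y⟩
  rw [Fin.natCast_val_natCast hdvd]
  induction j with
  | zero => simp only [Nat.cast_zero, hop.apply_zero, hop'.apply_zero, Fin.val_zero]
  | succ j ihj =>
    rw [Nat.cast_succ, Nat.cast_succ, hop.apply_add_one, hop'.apply_add_one, ← ihj,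
      ← val_add_one]
    rcases hop.eq_zero_or_lt_apply x j with h | h
    · rw [h, hop.zero_apply, Fin.val_zero, Nat.cast_zero, hop'.zero_apply]
    · exact ih _ h (x + 1)

theorem IsCyclicLD.val_apply_eq_of_lt_period {n : ℕ}
    {op₀ : Fin (2^n) → Fin (2^n) → Fin (2^n)}
    {op₁ : Fin (2^(n+1)) → Fin (2^(n+1)) → Fin (2^(n+1))}
    (hop₀ : IsCyclicLD n op₀) (hop₁ : IsCyclicLD (n+1) op₁) (a : ℕ)
    (hlt : period n op₀ a < period (n+1) op₁ a) {b : ℕ} (hb : b < period n op₀ a) :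
    (op₁ a b).val = (op₀ a b).val := by
  have hdvd : 2^n ∣ 2^(n+1) := pow_dvd_pow 2 n.le_succ
  have hproj (j : ℕ) : (((op₁ a j).val : ℕ) : Fin (2^n)) = op₀ a j := by
    rw [hop₁.natCast_val_apply n.le_succ hop₀, Fin.natCast_val_natCast hdvd,
      Fin.natCast_val_natCast hdvd]
  obtain ⟨hp_pos, hp_zero⟩ := hop₀.period_spec a
  have hne : op₁ a (period n op₀ a) ≠ 0 := fun h =>
    (period_le_of_apply_eq_zero (op := op₁) a hp_pos h).not_gt hlt
  have htop : (op₁ a (period n op₀ a)).val = 2^n :=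
    Fin.val_eq_two_pow_of_natCast_val_eq_zero hne (by rw [hproj, hp_zero])
  have hbelow : (op₁ a b).val < 2^n :=
    htop ▸ Fin.lt_def.1 (hop₁.strictMonoOn_apply a (hb.trans hlt) hlt hb)
  rw [← hproj, Fin.val_natCast, Nat.mod_eq_of_lt hbelow]

theorem word_values_stable_general (n : ℕ) (a : ℕ)
    (op₀ : Fin (2^n) → Fin (2^n) → Fin (2^n)) (hop₀ : IsCyclicLD n op₀)
    (op₁ : Fin (2^(n+1)) → Fin (2^(n+1)) → Fin (2^(n+1))) (hop₁ : IsCyclicLD (n+1) op₁)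
    (hdouble : period (n+1) op₁ ((a : ℕ) : Fin (2^(n+1))) =
      2 * period n op₀ ((a : ℕ) : Fin (2^n)))
    (c : ℕ)
    (hc : IsLeast {x : ℕ | 2^(n-1) ≤ (op₀ ((a : ℕ) : Fin (2^n)) ((x : ℕ) : Fin (2^n))).val}
      (c + 1)) :
    (op₁ ((a : ℕ) : Fin (2^(n+1))) ((c : ℕ) : Fin (2^(n+1)))).val < 2^(n-1) ∧
    (comp (n+1) op₁ ((a : ℕ) : Fin (2^(n+1))) ((c : ℕ) : Fin (2^(n+1)))).val < 2^n := by
  have hgrow : period n op₀ a < period (n+1) op₁ a := by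
    have := (hop₀.period_spec (a : Fin (2^n))).1
    omega
  have hc_lt : c + 1 < period n op₀ a :=
    hop₀.lt_period_of_isLeast (P := fun y => 2^(n-1) ≤ y.val) hc
  have hval (b : ℕ) (hb : b ≤ c + 1) : (op₁ a b).val = (op₀ a b).val :=
    hop₀.val_apply_eq_of_lt_period hop₁ a hgrow (by omega)
  refine ⟨?_, ?_⟩
  · rw [hval c c.le_succ]
    exact not_le.1 fun h => (hc.2 h).not_gt c.lt_succ_self
  · have hge : 2^(n-1) ≤ (op₁ a (c + 1 : ℕ)).val := hval (c + 1) le_rfl ▸ hc.1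
    have hne : op₁ a (c + 1 : ℕ) ≠ 0 := fun h => by
      rw [h, Fin.val_zero] at hge
      exact (Nat.two_pow_pos (n - 1)).not_ge hge
    rw [comp, ← Nat.cast_succ, Fin.val_sub_one_of_ne_zero hne, hval (c + 1) le_rfl]
    have := (op₀ a (c + 1 : ℕ)).isLt
    omega

/-- Lemma 5.3: let `n ≥ 1`, `a < 2^{n−1}` be such that the period of `a`
doubles from `A_n` to `A_{n+1}` (i.e. `γ_n` is in the range of `a`), and let
`c + 1 = t_n(a)` be the threshold of `a` in `A_n`.  Then `a *_{n+1} c < 2^{n−1}`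
and `a ∘_{n+1} c < 2^n`. -/
theorem word_values_stable (n : ℕ) (hn : 1 ≤ n) (a : ℕ) (ha : a < 2^(n-1))
    (op₀ : Fin (2^n) → Fin (2^n) → Fin (2^n)) (hop₀ : IsCyclicLD n op₀)
    (op₁ : Fin (2^(n+1)) → Fin (2^(n+1)) → Fin (2^(n+1))) (hop₁ : IsCyclicLD (n+1) op₁)
    (hdouble : period (n+1) op₁ ((a : ℕ) : Fin (2^(n+1))) =
      2 * period n op₀ ((a : ℕ) : Fin (2^n)))
    (c : ℕ)
    (hc : IsLeast {x : ℕ | 2^(n-1) ≤ (op₀ ((a : ℕ) : Fin (2^n)) ((x : ℕ) : Fin (2^n))).val}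
      (c + 1)) :
    (op₁ ((a : ℕ) : Fin (2^(n+1))) ((c : ℕ) : Fin (2^(n+1)))).val < 2^(n-1) ∧
    (comp (n+1) op₁ ((a : ℕ) : Fin (2^(n+1))) ((c : ℕ) : Fin (2^(n+1)))).val < 2^n :=
  word_values_stable_general n a op₀ hop₀ op₁ hop₁ hdouble c hc
end
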